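/- Every synchronizing weakly acyclic automaton with n states has a synchronizing word of length at most n − 1. -/

import Mathlib

/-- The extension of the transition function to words. -/
def deltaStar {Q A : Type*} (δ : Q → A → Q) (q : Q) (w : List A) : Q := w.foldl δ q

/-- A simple cycle: pairwise distinct states `q 0, …, q (k-1)` together with letters
mapping each state of the cycle to the next one (cyclically). -/
def IsSimpleCycle {Q A : Type*} (δ : Q → A → Q) (k : ℕ) (q : Fin k → Q) : Prop :=
  0 < k ∧ Function.Injective q ∧
    ∃ x : Fin k → A, ∀ i : Fin k, δ (q i) (x i) = q ⟨(i.val + 1) % k, Nat.mod_lt _ i.pos⟩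

/-- An automaton is weakly acyclic if all its simple cycles are self-loops. -/
def WeaklyAcyclic {Q A : Type*} (δ : Q → A → Q) : Prop :=
  ∀ (k : ℕ) (q : Fin k → Q), IsSimpleCycle δ k q → k = 1

/-- A sink state is fixed by every letter. -/
def IsSink {Q A : Type*} (δ : Q → A → Q) (q : Q) : Prop := ∀ x : A, δ q x = q

/-- The word `w` synchronizes the set `S` of states. -/
def SyncsSet {Q A : Type*} (δ : Q → A → Q) (S : Finset Q) (w : List A) : Prop :=
  ∃ q : Q, ∀ s ∈ S, deltaStar δ s w = q

/-- A set of states is synchronizing if some word synchronizes it. -/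
def IsSyncSet {Q A : Type*} (δ : Q → A → Q) (S : Finset Q) : Prop :=
  ∃ w : List A, SyncsSet δ S w

/-- The rank of a word with respect to an automaton: the size of the image of the
state set under the word. -/
def wordRank {Q A : Type*} [Fintype Q] [DecidableEq Q] (δ : Q → A → Q) (w : List A) : ℕ :=
  (Finset.univ.image fun q => deltaStar δ q w).card

/-- The rank of an automaton: the minimum rank of a word with respect to it. -/
noncomputable def autRank {Q A : Type*} [Fintype Q] [DecidableEq Q] (δ : Q → A → Q) : ℕ :=
  sInf {r | ∃ w : List A, wordRank δ w = r}

/-- The rank of a word with respect to a subset of states. -/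
def subsetWordRank {Q A : Type*} [DecidableEq Q] (δ : Q → A → Q) (S : Finset Q)
    (w : List A) : ℕ :=
  (S.image fun q => deltaStar δ q w).card

/-- The rank of a subset of states: the minimum rank of a word with respect to it. -/
noncomputable def subsetRank {Q A : Type*} [DecidableEq Q] (δ : Q → A → Q) (S : Finset Q) : ℕ :=
  sInf {r | ∃ w : List A, subsetWordRank δ S w = r}

/-- `w^j`: the word obtained by `j` concatenations of `w`. -/
def wordPow {A : Type*} (w : List A) (j : ℕ) : List A := (List.replicate j w).flatten

/-! Weak acyclicity makes reachability a partial order: a word leading from `p` back to `p`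
must fix `p` letter by letter. Let `S` be a closed set of states synchronized by some word, with
`|S| ≥ 2`, and let `q` be a minimal state of `S`. No other state of `S` can reach `q`, so `q` is
not the synchronizing target and hence not a sink; a letter `a` moving `q` then maps `S` into
the closed, still synchronizable set `S \ {q}`. Induction on `|S|` yields a synchronizing word
with at most one letter per removed state, i.e. of length at most `|S| - 1`. -/

section

variable {Q A : Type*} {δ : Q → A → Q}

lemma deltaStar_append (p : Q) (u v : List A) :
    deltaStar δ p (u ++ v) = deltaStar δ (deltaStar δ p u) v :=
  List.foldl_append

lemma deltaStar_take_add_one (p : Q) {u : List A} {k : ℕ} (hk : k < u.length) :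
    deltaStar δ p (u.take (k + 1)) = δ (deltaStar δ p (u.take k)) u[k] := by
  rw [List.take_add_one, List.getElem?_eq_getElem hk, deltaStar_append]
  rfl

lemma deltaStar_eq_self_of_forall_mem {p : Q} {u : List A} (h : ∀ a ∈ u, δ p a = p) :
    deltaStar δ p u = p := by
  induction u with
  | nil => rfl
  | cons b u ih =>
    simp only [List.mem_cons, forall_eq_or_imp] at h
    change deltaStar δ (δ p b) u = p
    rw [h.1]
    exact ih h.2

lemma IsSink.deltaStar_eq {q : Q} (h : IsSink δ q) (u : List A) : deltaStar δ q u = q :=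
  deltaStar_eq_self_of_forall_mem fun a _ => h a

/-- The states visited along a word that returns to its starting point form a closed walk;
if it is not a simple cycle, it splits at a repeated state into two shorter closed walks. -/
theorem WeaklyAcyclic.apply_eq_self_of_deltaStar_eq_self (hwa : WeaklyAcyclic δ) {p : Q}
    {u : List A} (hu : deltaStar δ p u = p) : ∀ a ∈ u, δ p a = p := by
  induction hm : u.length using Nat.strong_induction_on generalizing p u with
  | _ m ih =>
  obtain rfl | hpos := Nat.eq_zero_or_pos m
  · simp [List.length_eq_zero_iff.mp hm]
  set s : Fin m → Q := fun i => deltaStar δ p (u.take i) with hs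
  by_cases hinj : Function.Injective s
  · have hcyc : IsSimpleCycle δ m s := by
      refine ⟨hpos, hinj, fun i => u[i.val], fun i => ?_⟩
      have hi : i.val < u.length := hm ▸ i.isLt
      change δ (deltaStar δ p (u.take i)) u[i.val] = deltaStar δ p (u.take ((i.val + 1) % m))
      rw [← deltaStar_take_add_one (δ := δ) p hi]
      rcases Nat.lt_or_ge (i.val + 1) m with h | h
      · rw [Nat.mod_eq_of_lt h]
      · rw [show i.val + 1 = m by omega, Nat.mod_self, ← hm, List.take_length, hu]
        rfl
    obtain ⟨b, rfl⟩ := List.length_eq_one_iff.mp (hm.trans (hwa m s hcyc))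
    simpa [deltaStar] using hu
  · obtain ⟨i, j, hij, hsij⟩ : ∃ i j : Fin m, i < j ∧ s i = s j := by
      obtain ⟨i, j, h, hne⟩ := Function.not_injective_iff.mp hinj
      rcases lt_or_gt_of_ne hne with hlt | hlt
      exacts [⟨i, j, hlt, h⟩, ⟨j, i, hlt, h.symm⟩]
    set v := (u.take j).drop i
    have htake : u.take j = u.take i ++ v := by
      rw [← List.take_append_drop (i : ℕ) (u.take j), List.take_take,
        min_eq_left (Fin.le_iff_val_le_val.mp hij.le)]
    have hv : deltaStar δ (s i) v = s i :=
      calc deltaStar δ (s i) v = s j := by simp only [hs]; rw [htake, deltaStar_append]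
        _ = s i := hsij.symm
    have hloop : deltaStar δ p (u.take i ++ u.drop j) = p := by
      rw [deltaStar_append]
      change deltaStar δ (s i) (u.drop j) = p
      rw [hsij, ← deltaStar_append, List.take_append_drop, hu]
    have hlen_v : v.length < m := by
      simp only [v, List.length_drop, List.length_take, hm]
      omega
    have hlen_loop : (u.take i ++ u.drop j).length < m := by
      simp only [List.length_append, List.length_drop, List.length_take, hm]
      omega
    have hfix : ∀ a ∈ u.take i ++ u.drop j, δ p a = p := ih _ hlen_loop hloop rfl
    have hrp : s i = p :=
      deltaStar_eq_self_of_forall_mem fun a ha => hfix a (List.mem_append_left _ ha)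
    intro a ha
    rw [← List.take_append_drop j u, htake] at ha
    simp only [List.mem_append] at ha
    rcases ha with (ha | ha) | ha
    · exact hfix a (List.mem_append_left _ ha)
    · exact hrp ▸ ih _ hlen_v hv rfl a ha
    · exact hfix a (List.mem_append_right _ ha)

theorem WeaklyAcyclic.eq_of_deltaStar_eq (hwa : WeaklyAcyclic δ) {p q : Q} {u v : List A}
    (hu : deltaStar δ p u = q) (hv : deltaStar δ q v = p) : p = q := by
  have hloop : deltaStar δ p (u ++ v) = p := by rw [deltaStar_append, hu, hv]
  rw [← hu, deltaStar_eq_self_of_forall_mem fun a ha =>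
    hwa.apply_eq_self_of_deltaStar_eq_self hloop a (List.mem_append_left _ ha)]

abbrev WeaklyAcyclic.reachOrder (hwa : WeaklyAcyclic δ) : PartialOrder Q where
  le p q := ∃ u : List A, deltaStar δ p u = q
  le_refl _ := ⟨[], rfl⟩
  le_trans _ _ _ := fun ⟨u, hu⟩ ⟨v, hv⟩ => ⟨u ++ v, by rw [deltaStar_append, hu, hv]⟩
  le_antisymm _ _ := fun ⟨_, hu⟩ ⟨_, hv⟩ => hwa.eq_of_deltaStar_eq hu hv

theorem WeaklyAcyclic.exists_syncsSet_length_le [DecidableEq Q] (hwa : WeaklyAcyclic δ)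
    {S : Finset Q} (hS : ∀ p ∈ S, ∀ a, δ p a ∈ S) (hsync : IsSyncSet δ S) :
    ∃ w : List A, w.length ≤ S.card - 1 ∧ SyncsSet δ S w := by
  induction S using Finset.strongInduction with
  | H S ih =>
  obtain ⟨w, t, hw⟩ := hsync
  rcases le_or_gt S.card 1 with hle | hlt
  · refine ⟨[], Nat.zero_le _, ?_⟩
    rcases S.eq_empty_or_nonempty with rfl | ⟨x, hx⟩
    · exact ⟨t, by simp⟩
    · exact ⟨x, fun s hs => Finset.card_le_one.mp hle s hs x hx⟩
  let := hwa.reachOrder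
  obtain ⟨q, hq⟩ := S.exists_minimal (Finset.card_pos.mp (by omega))
  have hsource : ∀ p ∈ S, ∀ u : List A, deltaStar δ p u = q → p = q :=
    fun p hp u hu => hq.eq_of_le hp ⟨u, hu⟩
  have hentry : ∀ p ∈ S, ∀ b, δ p b = q → p = q := fun p hp b => hsource p hp [b]
  obtain ⟨a, ha⟩ : ∃ a, δ q a ≠ q := by
    by_contra! hsink
    obtain ⟨p, hp, hpq⟩ := S.exists_mem_ne hlt q
    refine hpq (hsource p hp w ?_)
    rw [hw p hp, ← hw q hq.prop, IsSink.deltaStar_eq hsink]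
  have hclosed : ∀ p ∈ S.erase q, ∀ b, δ p b ∈ S.erase q := fun p hp b =>
    Finset.mem_erase.mpr
      ⟨fun h => Finset.ne_of_mem_erase hp (hentry p (Finset.mem_of_mem_erase hp) b h),
        hS p (Finset.mem_of_mem_erase hp) b⟩
  have hmaps : ∀ p ∈ S, δ p a ∈ S.erase q := fun p hp =>
    Finset.mem_erase.mpr ⟨fun h => by obtain rfl := hentry p hp a h; exact ha h, hS p hp a⟩
  obtain ⟨w', hlen, t', hw'⟩ := ih (S.erase q) (Finset.erase_ssubset hq.prop) hclosed
    ⟨w, t, fun p hp => hw p (Finset.mem_of_mem_erase hp)⟩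
  refine ⟨a :: w', ?_, t', fun p hp => hw' _ (hmaps p hp)⟩
  rw [Finset.card_erase_of_mem hq.prop] at hlen
  simp only [List.length_cons]
  omega

end

theorem stmt6_general {Q A : Type*} [Fintype Q] (δ : Q → A → Q) (n : ℕ)
    (hn : Fintype.card Q = n) (hwa : WeaklyAcyclic δ)
    (hsync : ∃ (w : List A) (q : Q), ∀ p : Q, deltaStar δ p w = q) :
    ∃ (w : List A) (q : Q), w.length ≤ n - 1 ∧ ∀ p : Q, deltaStar δ p w = q := by
  classical
  obtain ⟨w, q, hw⟩ := hsync
  obtain ⟨w', hlen, q', hw'⟩ := hwa.exists_syncsSet_length_le (S := Finset.univ)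
    (fun _ _ _ => Finset.mem_univ _) ⟨w, q, fun p _ => hw p⟩
  rw [Finset.card_univ, hn] at hlen
  exact ⟨w', q', hlen, fun p => hw' p (Finset.mem_univ p)⟩

/-- Every synchronizing weakly acyclic automaton with `n` states has a synchronizing word
of length at most `n - 1`. -/
theorem stmt6 {Q A : Type*} [Fintype Q] [Fintype A] (δ : Q → A → Q) (n : ℕ)
    (hn : Fintype.card Q = n) (hwa : WeaklyAcyclic δ)
    (hsync : ∃ (w : List A) (q : Q), ∀ p : Q, deltaStar δ p w = q) :
    ∃ (w : List A) (q : Q), w.length ≤ n - 1 ∧ ∀ p : Q, deltaStar δ p w = q :=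
  stmt6_general δ n hn hwa hsync
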